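/- The group R5 = (R3 ×_sign S24) ×_sign (S24 × S24) has order equal to |R3| · (24!)^3 / 4, which equals 2582636272886959379162819698174683585918088940054237132144778804568925405184000000000000000. -/

import Mathlib

open Equiv

/-- The automorphism of `(Z/n)^m` (written multiplicatively) permuting coordinates by `σ`. -/
def permAut (n m : ℕ) (σ : Equiv.Perm (Fin m)) :
    MulAut (Fin m → Multiplicative (ZMod n)) :=
  { Equiv.piCongrLeft' (fun _ => Multiplicative (ZMod n)) σ with
    map_mul' := fun _ _ => rfl }

/-- The action of `S_m` on `(Z/n)^m` permuting coordinates. -/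
def permHom (n m : ℕ) : Equiv.Perm (Fin m) →* MulAut (Fin m → Multiplicative (ZMod n)) where
  toFun := permAut n m
  map_one' := by ext x i; rfl
  map_mul' := fun σ τ => by ext x i; rfl

/-- The wreath product `C_n ≀ S_m = (Z/n)^m ⋊ S_m`, where `S_m` permutes coordinates. -/
abbrev Wr (n m : ℕ) :=
  SemidirectProduct (Fin m → Multiplicative (ZMod n)) (Equiv.Perm (Fin m)) (permHom n m)

/-- The homomorphism `C_n ≀ S_m → Z/n`, `(x, σ) ↦ ∑ i, x i`. -/
def sumHom (n m : ℕ) : Wr n m →* Multiplicative (ZMod n) :=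
  SemidirectProduct.lift
    (MonoidHom.mk' (fun x => ∏ i, x i) (by intro a b; simp [Finset.prod_mul_distrib]))
    1
    (by
      intro σ
      refine MonoidHom.ext fun x => ?_
      simp
      exact Equiv.prod_comp σ.symm x)

/-- `(C_n ≀ S_m)^°`, the kernel of `(x, σ) ↦ ∑ i, x i`. -/
abbrev WrO (n m : ℕ) : Subgroup (Wr n m) := (sumHom n m).ker

/-- The sign homomorphism `(C_n ≀ S_m)^° → {±1}`, `(x, σ) ↦ sign σ`. -/
def signW (n m : ℕ) : ↥(WrO n m) →* ℤˣ :=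
  (Equiv.Perm.sign.comp SemidirectProduct.rightHom).comp (WrO n m).subtype

/-- The fiber product `G ×_{φ,ψ} H = {(a, b) : φ a = ψ b}` of two group homomorphisms,
as a subgroup of the direct product `G × H`. -/
def fiberProduct {G H K : Type*} [Group G] [Group H] [Group K]
    (φ : G →* K) (ψ : H →* K) : Subgroup (G × H) where
  carrier := {p | φ p.1 = ψ p.2}
  one_mem' := by simp
  mul_mem' := by
    intro a b ha hb
    simp only [Set.mem_setOf_eq, Prod.fst_mul, Prod.snd_mul, map_mul] at *
    rw [ha, hb]
  inv_mem' := by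
    intro a ha
    simp only [Set.mem_setOf_eq, Prod.fst_inv, Prod.snd_inv, map_inv] at *
    rw [ha]

/-- The Rubik's Cube group `R3 = (C3 ≀ S8)^° ×_sign (C2 ≀ S12)^°`. -/
abbrev RubikR3 : Subgroup (↥(WrO 3 8) × ↥(WrO 2 12)) :=
  fiberProduct (signW 3 8) (signW 2 12)

/-- The sign of the corner permutation `σc`, as a homomorphism on `R3`
(recall that `sign σc = sign σe` on `R3`). -/
def signCorners : ↥RubikR3 →* ℤˣ :=
  ((signW 3 8).comp (MonoidHom.fst _ _)).comp RubikR3.subtype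

/-- The fiber product `R3 ×_sign S24`, with respect to `(x, σc, y, σe) ↦ sign σc` and
`τ ↦ sign τ`. -/
abbrev R3xS24 : Subgroup (↥RubikR3 × Equiv.Perm (Fin 24)) :=
  fiberProduct signCorners (Equiv.Perm.sign : Equiv.Perm (Fin 24) →* ℤˣ)

/-- The map `(x, σc, y, σe, τ) ↦ sign τ` on `R3 ×_sign S24`. -/
def signTau : ↥R3xS24 →* ℤˣ :=
  ((Equiv.Perm.sign : Equiv.Perm (Fin 24) →* ℤˣ).comp (MonoidHom.snd _ _)).comp
    R3xS24.subtype

/-- The map `(ρc, ρe) ↦ sign ρc` on `S24 × S24`. -/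
def signRhoC : Equiv.Perm (Fin 24) × Equiv.Perm (Fin 24) →* ℤˣ :=
  (Equiv.Perm.sign : Equiv.Perm (Fin 24) →* ℤˣ).comp (MonoidHom.fst _ _)

/-- The Professor's Cube group `R5 = (R3 ×_sign S24) ×_sign (S24 × S24)`. -/
abbrev ProfR5 : Subgroup (↥R3xS24 × (Equiv.Perm (Fin 24) × Equiv.Perm (Fin 24))) :=
  fiberProduct signTau signRhoC

/-! A fiber product `G ×_K H` over a surjection `ψ : H → K` is in bijection with `G × ker ψ`,
so `|G ×_K H| · |K| = |G| · |H|`. Every sign map in the towers defining `R3` and `R5` is onto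
`{±1}` (a transposition of corners, edges or facelets lies in each group), so each fiber product
halves the order of the direct product: `|R5| = |R3| · 24! · (24!)² / 4`, and
`|R3| = |(C3 ≀ S8)°| · |(C2 ≀ S12)°| / 2 = (3⁷ · 8!) (2¹¹ · 12!) / 2`. -/

theorem MonoidHom.card_ker_mul_card_of_surjective {H K : Type*} [Group H] [Group K]
    (ψ : H →* K) (hψ : Function.Surjective ψ) :
    Nat.card ψ.ker * Nat.card K = Nat.card H := by
  rw [← Subgroup.card_mul_index ψ.ker, Subgroup.index_ker, ψ.range_eq_top.mpr hψ,
    Subgroup.card_top]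

section FiberProduct

variable {G H K : Type*} [Group G] [Group H] [Group K] (φ : G →* K) (ψ : H →* K)

noncomputable def fiberProductEquivProdKer (hψ : Function.Surjective ψ) :
    fiberProduct φ ψ ≃ G × ψ.ker where
  toFun p := (p.1.1, ⟨(Function.surjInv hψ (φ p.1.1))⁻¹ * p.1.2, by
    have hp : φ p.1.1 = ψ p.1.2 := p.2
    simp [MonoidHom.mem_ker, Function.surjInv_eq hψ, ← hp]⟩)
  invFun q := ⟨(q.1, Function.surjInv hψ (φ q.1) * q.2.1), by
    show φ q.1 = ψ (Function.surjInv hψ (φ q.1) * q.2.1)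
    rw [map_mul, q.2.2, mul_one, Function.surjInv_eq hψ]⟩
  left_inv p := by ext <;> simp
  right_inv q := by ext <;> simp

theorem card_fiberProduct_mul_card (hψ : Function.Surjective ψ) :
    Nat.card (fiberProduct φ ψ) * Nat.card K = Nat.card G * Nat.card H := by
  rw [Nat.card_congr (fiberProductEquivProdKer φ ψ hψ), Nat.card_prod, mul_assoc,
    ψ.card_ker_mul_card_of_surjective hψ]

theorem card_fiberProduct_mul_two {ψ : H →* ℤˣ} (φ : G →* ℤˣ)
    (hψ : Function.Surjective ψ) :
    Nat.card (fiberProduct φ ψ) * 2 = Nat.card G * Nat.card H := by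
  rw [← card_fiberProduct_mul_card φ ψ hψ, Nat.card_eq_fintype_card (α := ℤˣ),
    Fintype.card_units_int]

theorem fiberProduct_fst_surjective (hψ : Function.Surjective ψ) :
    Function.Surjective fun p : fiberProduct φ ψ => p.1.1 := fun a =>
  ⟨⟨(a, Function.surjInv hψ (φ a)), (Function.surjInv_eq hψ (φ a)).symm⟩, rfl⟩

theorem fiberProduct_snd_surjective (hφ : Function.Surjective φ) :
    Function.Surjective fun p : fiberProduct φ ψ => p.1.2 := fun b =>
  ⟨⟨(Function.surjInv hφ (ψ b), b), Function.surjInv_eq hφ (ψ b)⟩, rfl⟩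

end FiberProduct

theorem card_wr (n m : ℕ) [NeZero n] : Nat.card (Wr n m) = n ^ m * m.factorial := by
  rw [Nat.card_congr SemidirectProduct.equivProd, Nat.card_prod, Nat.card_perm, Nat.card_pi]
  simp

theorem sumHom_surjective (n m : ℕ) [NeZero m] : Function.Surjective (sumHom n m) := fun g =>
  ⟨SemidirectProduct.inl (Pi.mulSingle 0 g), by simp [sumHom]⟩

theorem card_wrO (n m : ℕ) [NeZero n] [NeZero m] :
    Nat.card (WrO n m) = n ^ (m - 1) * m.factorial := by
  have h := (sumHom n m).card_ker_mul_card_of_surjective (sumHom_surjective n m)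
  rw [card_wr, Nat.card_congr Multiplicative.toAdd, Nat.card_zmod,
    ← Nat.pow_pred_mul (NeZero.pos m), mul_right_comm] at h
  exact Nat.eq_of_mul_eq_mul_right (NeZero.pos n) h

theorem signW_surjective (n : ℕ) {m : ℕ} (hm : 2 ≤ m) : Function.Surjective (signW n m) := by
  let i : Fin m := ⟨0, by omega⟩
  let j : Fin m := ⟨1, by omega⟩
  have hij : i ≠ j := by simp [i, j]
  have hswap : SemidirectProduct.inr (swap i j) ∈ WrO n m := by simp [sumHom]
  intro u
  rcases Int.units_eq_one_or u with rfl | rfl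
  · exact ⟨1, map_one _⟩
  · exact ⟨⟨_, hswap⟩, by simp [signW, Perm.sign_swap hij]⟩

theorem card_rubikR3 : Nat.card RubikR3 = 43252003274489856000 := by
  have h : Nat.card RubikR3 * 2 = Nat.card (WrO 3 8) * Nat.card (WrO 2 12) :=
    card_fiberProduct_mul_two _ (signW_surjective 2 (m := 12) (by norm_num))
  rw [card_wrO, card_wrO] at h
  norm_num [Nat.factorial] at h
  omega

theorem signCorners_surjective : Function.Surjective signCorners := by
  exact (signW_surjective 3 (m := 8) (by norm_num)).comp
    (fiberProduct_fst_surjective _ _ (signW_surjective 2 (m := 12) (by norm_num)))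

theorem signTau_surjective : Function.Surjective signTau := by
  exact (Perm.sign_surjective (Fin 24)).comp
    (fiberProduct_snd_surjective _ _ signCorners_surjective)

theorem signRhoC_surjective : Function.Surjective signRhoC := by
  exact (Perm.sign_surjective (Fin 24)).comp (Prod.fst_surjective (β := Perm (Fin 24)))

theorem card_profR5_mul_four :
    Nat.card ProfR5 * 4 = Nat.card RubikR3 * Nat.factorial 24 ^ 3 := by
  have hR4 : Nat.card R3xS24 * 2 = Nat.card RubikR3 * Nat.factorial 24 := by
    rw [card_fiberProduct_mul_two _ (Perm.sign_surjective _), Nat.card_perm, Nat.card_fin]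
  have hR5 : Nat.card ProfR5 * 2 = Nat.card R3xS24 * (Nat.factorial 24 * Nat.factorial 24) := by
    rw [card_fiberProduct_mul_two _ signRhoC_surjective, Nat.card_prod, Nat.card_perm,
      Nat.card_fin]
  calc Nat.card ProfR5 * 4 = Nat.card ProfR5 * 2 * 2 := by ring
    _ = Nat.card R3xS24 * 2 * (Nat.factorial 24 * Nat.factorial 24) := by rw [hR5]; ring
    _ = Nat.card RubikR3 * Nat.factorial 24 ^ 3 := by rw [hR4]; ring

/-- The Professor's Cube group `R5 = (R3 ×_sign S24) ×_sign (S24 × S24)` has order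
`|R3| · (24!)^3 / 4`, which equals
`2582636272886959379162819698174683585918088940054237132144778804568925405184000000000000000`. -/
theorem professor_R5_card :
    Nat.card ↥ProfR5 = Nat.card ↥RubikR3 * (Nat.factorial 24) ^ 3 / 4 ∧
    Nat.card ↥ProfR5 =
      2582636272886959379162819698174683585918088940054237132144778804568925405184000000000000000 := by
  have hdiv : Nat.card RubikR3 * Nat.factorial 24 ^ 3 / 4 = Nat.card ProfR5 :=
    Nat.div_eq_of_eq_mul_left (by norm_num) card_profR5_mul_four.symm
  refine ⟨hdiv.symm, ?_⟩
  rw [← hdiv, card_rubikR3]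
  norm_num [Nat.factorial]
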